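/- arXiv:2311.02048 — 6 statements merged into one kernel-verified Lean document; each statement's English description precedes it below -/
import Mathlib

section
/- Let G be a group given by a presentation ⟨S; R⟩ in which every relator r ∈ R is a word of the form s₁s₂⁻¹s₃s₄⁻¹⋯s_{2k-1}s_{2k}⁻¹ for some k and some generators s₁,…,s_{2k} ∈ S (i.e., an alternating word of even length with exponents +1,−1 alternating). Fix s₀ ∈ S. Then the image of s₀ in G generates an infinite cyclic subgroup. -/
/-- A word is "alternating" if it is a product of terms `s · t⁻¹` with `s, t` generators. -/
def IsAlternatingWord {S : Type*} (r : FreeGroup S) : Prop :=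
  ∃ L : List (S × S),
    r = (L.map (fun p => FreeGroup.of p.1 * (FreeGroup.of p.2)⁻¹)).prod

theorem infinite_order_of_generator {S : Type*} (R : Set (FreeGroup S))
    (hR : ∀ r ∈ R, IsAlternatingWord r) (s₀ : S) :
    ¬ IsOfFinOrder (PresentedGroup.of (rels := R) s₀) := by
  have hrel : ∀ r ∈ R, FreeGroup.lift (fun _ : S => Multiplicative.ofAdd (1 : ℤ)) r = 1 := by
    intro r hr
    obtain ⟨L, rfl⟩ := hR r hr
    rw [map_list_prod]
    refine List.prod_eq_one ?_
    intro x hx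
    simp only [List.map_map, List.mem_map] at hx
    obtain ⟨p, _, rfl⟩ := hx
    simp
  let φ : PresentedGroup R →* Multiplicative ℤ := PresentedGroup.toGroup hrel
  intro h
  have h2 : IsOfFinOrder (φ (PresentedGroup.of s₀)) := MonoidHom.isOfFinOrder φ h
  have h3 : φ (PresentedGroup.of s₀) = Multiplicative.ofAdd (1 : ℤ) :=
    PresentedGroup.toGroup.of hrel
  rw [h3] at h2
  obtain ⟨n, hn, hpow⟩ := isOfFinOrder_iff_pow_eq_one.mp h2
  have : ((n : ℤ) • (1 : ℤ)) = 0 := by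
    have := congrArg Multiplicative.toAdd hpow
    simpa using this
  simp at this
  omega
end

section
/- Let G be a group given by a presentation ⟨S; R⟩ in which every relator is an alternating word s₁s₂⁻¹⋯s_{2k-1}s_{2k}⁻¹ of generators. Fix s₀ ∈ S and let H be the subgroup of G generated by the elements s·s₀⁻¹ for s ∈ S, s ≠ s₀. Then G is the internal free product of the infinite cyclic subgroup ⟨s₀⟩ and H; in particular, G ≅ ℤ * H. -/
theorem internal_free_product_decomposition {S : Type*} (R : Set (FreeGroup S))
    (hR : ∀ r ∈ R, IsAlternatingWord r) (s₀ : S)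
    (H : Subgroup (PresentedGroup R))
    (hH : H = Subgroup.closure
      {x | ∃ s : S, s ≠ s₀ ∧
        x = PresentedGroup.of (rels := R) s * (PresentedGroup.of (rels := R) s₀)⁻¹}) :
    Function.Bijective
      (Monoid.Coprod.lift (zpowersHom (PresentedGroup R) (PresentedGroup.of (rels := R) s₀))
        H.subtype) := by
  classical
  set ι : S → PresentedGroup R := fun s => PresentedGroup.of (rels := R) s with hι
  have hmem : ∀ s : S, ι s * (ι s₀)⁻¹ ∈ H := by
    intro s
    by_cases h : s = s₀
    · subst h; simpa using one_mem H
    · rw [hH]; exact Subgroup.subset_closure ⟨s, h, rfl⟩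
  set f : S → Monoid.Coprod (Multiplicative ℤ) H := fun s =>
    Monoid.Coprod.inr ⟨ι s * (ι s₀)⁻¹, hmem s⟩ *
      Monoid.Coprod.inl (Multiplicative.ofAdd 1) with hf
  have hpairmem : ∀ p : S × S, ι p.1 * (ι p.2)⁻¹ ∈ H := by
    intro p
    have : ι p.1 * (ι p.2)⁻¹ = (ι p.1 * (ι s₀)⁻¹) * (ι p.2 * (ι s₀)⁻¹)⁻¹ := by group
    rw [this]
    exact mul_mem (hmem _) (inv_mem (hmem _))
  have hmk : ∀ L : List (S × S),
      PresentedGroup.mk R ((L.map (fun p => FreeGroup.of p.1 * (FreeGroup.of p.2)⁻¹)).prod)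
        ∈ H := by
    intro L
    induction L with
    | nil => simpa using one_mem H
    | cons p L ih =>
        simp only [List.map_cons, List.prod_cons, map_mul]
        exact mul_mem (hpairmem p) ih
  have hpair : ∀ p : S × S,
      FreeGroup.lift f (FreeGroup.of p.1 * (FreeGroup.of p.2)⁻¹)
        = Monoid.Coprod.inr ⟨ι p.1 * (ι p.2)⁻¹, hpairmem p⟩ := by
    intro p
    have hb : FreeGroup.lift f (FreeGroup.of p.1 * (FreeGroup.of p.2)⁻¹)
        = f p.1 * (f p.2)⁻¹ := by
      simp only [map_mul, map_inv, FreeGroup.lift_apply_of]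
    rw [hb]
    show Monoid.Coprod.inr _ * Monoid.Coprod.inl _ *
        (Monoid.Coprod.inr _ * Monoid.Coprod.inl _)⁻¹ = _
    rw [mul_inv_rev, mul_assoc, mul_inv_cancel_left, ← map_inv, ← map_mul]
    congr 1
    ext
    show (ι p.1 * (ι s₀)⁻¹) * (ι p.2 * (ι s₀)⁻¹)⁻¹ = ι p.1 * (ι p.2)⁻¹
    group
  have key : ∀ L : List (S × S),
      FreeGroup.lift f ((L.map (fun p => FreeGroup.of p.1 * (FreeGroup.of p.2)⁻¹)).prod)
        = Monoid.Coprod.inr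
            ⟨PresentedGroup.mk R
              ((L.map (fun p => FreeGroup.of p.1 * (FreeGroup.of p.2)⁻¹)).prod), hmk L⟩ := by
    intro L
    induction L with
    | nil =>
        simp only [List.map_nil, List.prod_nil, map_one]
        exact (map_one (Monoid.Coprod.inr (M := Multiplicative ℤ) (N := H))).symm
    | cons p L ih =>
        calc FreeGroup.lift f (((p :: L).map
                (fun p => FreeGroup.of p.1 * (FreeGroup.of p.2)⁻¹)).prod)
            = FreeGroup.lift f (FreeGroup.of p.1 * (FreeGroup.of p.2)⁻¹) *
                FreeGroup.lift f ((L.map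
                  (fun p => FreeGroup.of p.1 * (FreeGroup.of p.2)⁻¹)).prod) := by
              rw [List.map_cons, List.prod_cons, map_mul]
          _ = Monoid.Coprod.inr ((⟨ι p.1 * (ι p.2)⁻¹, hpairmem p⟩ : H) *
                ⟨PresentedGroup.mk R ((L.map
                  (fun p => FreeGroup.of p.1 * (FreeGroup.of p.2)⁻¹)).prod), hmk L⟩) := by
              rw [hpair p, ih, map_mul]
          _ = Monoid.Coprod.inr ⟨PresentedGroup.mk R (((p :: L).map
                (fun p => FreeGroup.of p.1 * (FreeGroup.of p.2)⁻¹)).prod), hmk (p :: L)⟩ := by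
              rfl
  have hrel : ∀ r ∈ R, FreeGroup.lift f r = 1 := by
    intro r hr
    obtain ⟨L, rfl⟩ := hR r hr
    rw [key L]
    have h1 : PresentedGroup.mk R
        ((L.map (fun p => FreeGroup.of p.1 * (FreeGroup.of p.2)⁻¹)).prod) = 1 := by
      exact (QuotientGroup.eq_one_iff _).mpr (Subgroup.subset_normalClosure hr)
    rw [show ((⟨_, hmk L⟩ : H)) = (1 : H) from Subtype.ext h1, map_one]

  set ψ : PresentedGroup R →* Monoid.Coprod (Multiplicative ℤ) H :=
    PresentedGroup.toGroup hrel with hψ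
  have hψof : ∀ s : S, ψ (ι s) = f s := fun s => PresentedGroup.toGroup.of hrel
  set φ : Monoid.Coprod (Multiplicative ℤ) H →* PresentedGroup R :=
    Monoid.Coprod.lift (zpowersHom (PresentedGroup R) (ι s₀)) H.subtype with hφ
  have hfs₀ : f s₀ = Monoid.Coprod.inl (Multiplicative.ofAdd 1) := by
    have h1 : (⟨ι s₀ * (ι s₀)⁻¹, hmem s₀⟩ : H) = 1 := Subtype.ext (mul_inv_cancel _)
    calc f s₀ = Monoid.Coprod.inr (⟨ι s₀ * (ι s₀)⁻¹, hmem s₀⟩ : H) *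
          Monoid.Coprod.inl (Multiplicative.ofAdd 1) := rfl
      _ = Monoid.Coprod.inl (Multiplicative.ofAdd 1) := by rw [h1, map_one, one_mul]
  -- φ ∘ ψ = id
  have hφψ : ∀ x, φ (ψ x) = x := by
    have : φ.comp ψ = MonoidHom.id _ := by
      ext s
      simp only [MonoidHom.comp_apply, MonoidHom.id_apply]
      rw [show PresentedGroup.of s = ι s from rfl, hψof, hf, map_mul, hφ,
        Monoid.Coprod.lift_apply_inr, Monoid.Coprod.lift_apply_inl]
      simp
    intro x
    exact DFunLike.congr_fun this x
  -- ψ ∘ φ = id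
  have hψφ : ∀ y, ψ (φ y) = y := by
    have hgen : ∀ g (hg : g ∈ Subgroup.closure
        {x | ∃ s : S, s ≠ s₀ ∧
          x = PresentedGroup.of (rels := R) s * (PresentedGroup.of (rels := R) s₀)⁻¹}),
        ψ g = Monoid.Coprod.inr (⟨g, hH ▸ hg⟩ : H) := by
      intro g hg
      induction hg using Subgroup.closure_induction with
      | mem x hx =>
          obtain ⟨s, hs, rfl⟩ := hx
          have h1 : ψ (PresentedGroup.of (rels := R) s) = f s := hψof s
          have h2 : ψ (PresentedGroup.of (rels := R) s₀)
              = Monoid.Coprod.inl (Multiplicative.ofAdd 1) := (hψof s₀).trans hfs₀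
          rw [map_mul, map_inv, h1, h2]
          calc f s * (Monoid.Coprod.inl (Multiplicative.ofAdd 1))⁻¹
              = Monoid.Coprod.inr (⟨ι s * (ι s₀)⁻¹, hmem s⟩ : H) *
                  (Monoid.Coprod.inl (Multiplicative.ofAdd 1) *
                    (Monoid.Coprod.inl (Multiplicative.ofAdd 1))⁻¹) := by
                rw [← mul_assoc]
            _ = Monoid.Coprod.inr (⟨ι s * (ι s₀)⁻¹, hmem s⟩ : H) := by
                simp
            _ = _ := rfl
      | one =>
          rw [map_one]
          exact (map_one (Monoid.Coprod.inr (M := Multiplicative ℤ) (N := H))).symm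
      | mul x y hx hy ihx ihy =>
          rw [map_mul, ihx, ihy, ← map_mul]
          rfl
      | inv x hx ihx =>
          rw [map_inv, ihx, ← map_inv]
          rfl
    have : ψ.comp φ = MonoidHom.id _ := by
      apply Monoid.Coprod.hom_ext
      · ext
        simp only [MonoidHom.comp_apply, MonoidHom.id_apply, hφ,
          Monoid.Coprod.lift_apply_inl, zpowersHom_apply]
        rw [map_zpow, show ψ (ι s₀) = f s₀ from hψof s₀, hfs₀, ← map_zpow]
        congr 1
      · ext x
        simp only [MonoidHom.comp_apply, MonoidHom.id_apply, hφ,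
          Monoid.Coprod.lift_apply_inr, Subgroup.coe_subtype]
        exact hgen x.1 (hH ▸ x.2)
    intro y
    exact DFunLike.congr_fun this y
  exact Function.bijective_iff_has_inverse.mpr ⟨ψ, hψφ, hφψ⟩
end

section
/- Let G be a group given by a presentation ⟨S; R⟩ in which every relator is an alternating word s₁s₂⁻¹⋯s_{2k-1}s_{2k}⁻¹, let s₀, s₁ ∈ S, and let H be the subgroup of G generated by {s·s₀⁻¹ : s ∈ S, s ≠ s₀}. Then G has an automorphism φ with φ(s₀) = s₁ and φ(h) = h for all h ∈ H. -/
section Aux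

variable {S : Type*} (R : Set (FreeGroup S))

/-- Lifting `s ↦ of s * c` along an alternating word gives the same as the quotient map. -/
lemma lift_alt (c : PresentedGroup R) (L : List (S × S)) :
    FreeGroup.lift (fun s => PresentedGroup.of (rels := R) s * c)
      ((L.map (fun p => FreeGroup.of p.1 * (FreeGroup.of p.2)⁻¹)).prod) =
    PresentedGroup.mk R ((L.map (fun p => FreeGroup.of p.1 * (FreeGroup.of p.2)⁻¹)).prod) := by
  induction L with
  | nil => simp
  | cons p L ih =>
    simp only [List.map_cons, List.prod_cons, map_mul, map_inv, FreeGroup.lift_apply_of, ih]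
    congr 1
    show _ = PresentedGroup.of (rels := R) p.1 * (PresentedGroup.of (rels := R) p.2)⁻¹
    group

lemma lift_cond (hR : ∀ r ∈ R, IsAlternatingWord r) (c : PresentedGroup R) :
    ∀ r ∈ R, FreeGroup.lift (fun s => PresentedGroup.of (rels := R) s * c) r = 1 := by
  intro r hr
  obtain ⟨L, rfl⟩ := hR r hr
  rw [lift_alt]
  exact (QuotientGroup.eq_one_iff _).mpr (Subgroup.subset_normalClosure hr)

end Aux

theorem exists_automorphism_moving_basepoint {S : Type*} (R : Set (FreeGroup S))
    (hR : ∀ r ∈ R, IsAlternatingWord r) (s₀ s₁ : S)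
    (H : Subgroup (PresentedGroup R))
    (hH : H = Subgroup.closure
      {x | ∃ s : S, s ≠ s₀ ∧
        x = PresentedGroup.of (rels := R) s * (PresentedGroup.of (rels := R) s₀)⁻¹}) :
    ∃ φ : PresentedGroup R ≃* PresentedGroup R,
      φ (PresentedGroup.of (rels := R) s₀) = PresentedGroup.of (rels := R) s₁ ∧
      ∀ h ∈ H, φ h = h := by
  set c : PresentedGroup R :=
    (PresentedGroup.of (rels := R) s₀)⁻¹ * PresentedGroup.of (rels := R) s₁ with hc
  set d : PresentedGroup R :=
    (PresentedGroup.of (rels := R) s₁)⁻¹ * PresentedGroup.of (rels := R) s₀ with hd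
  set f : PresentedGroup R →* PresentedGroup R :=
    PresentedGroup.toGroup (lift_cond R hR c) with hf
  set g : PresentedGroup R →* PresentedGroup R :=
    PresentedGroup.toGroup (lift_cond R hR d) with hg
  have hfof : ∀ s : S, f (PresentedGroup.of s) = PresentedGroup.of (rels := R) s * c :=
    fun s => PresentedGroup.toGroup.of _
  have hgof : ∀ s : S, g (PresentedGroup.of s) = PresentedGroup.of (rels := R) s * d :=
    fun s => PresentedGroup.toGroup.of _
  have hgf : g.comp f = MonoidHom.id _ := by
    apply PresentedGroup.ext
    intro x
    simp only [MonoidHom.comp_apply, MonoidHom.id_apply, hfof, map_mul, hgof, hc, hd, map_inv]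
    group
  have hfg : f.comp g = MonoidHom.id _ := by
    apply PresentedGroup.ext
    intro x
    simp only [MonoidHom.comp_apply, MonoidHom.id_apply, hfof, map_mul, hgof, hc, hd, map_inv]
    group
  refine ⟨{ toFun := ⇑f, invFun := g,
            left_inv := fun x => congrFun (congrArg DFunLike.coe hgf) x,
            right_inv := fun x => congrFun (congrArg DFunLike.coe hfg) x,
            map_mul' := map_mul f }, ?_, ?_⟩
  · simp only [MulEquiv.coe_mk, Equiv.coe_fn_mk]
    rw [hfof, hc]; group
  · intro h hh
    simp only [MulEquiv.coe_mk, Equiv.coe_fn_mk]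
    rw [hH] at hh
    induction hh using Subgroup.closure_induction with
    | mem x hx =>
      obtain ⟨s, _, rfl⟩ := hx
      rw [map_mul, map_inv, hfof, hfof, hc]; group
    | one => simp
    | mul x y _ _ hx hy => rw [map_mul, hx, hy]
    | inv x _ hx => rw [map_inv, hx]
end

section
/- Let F be the free group on a set A, let F⁽²⁾ be the kernel of the homomorphism F → ℤ/2ℤ sending every generator to 1, and let N be the subgroup of F⁽²⁾ normally generated (in F⁽²⁾) by the squares {x_a² : a ∈ A}. Then N is a normal subgroup of all of F. -/
/-- The homomorphism from the free group on `A` to `ℤ/2` sending every generator to `1`. -/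
noncomputable def modTwoHom (A : Type*) : FreeGroup A →* Multiplicative (ZMod 2) :=
  FreeGroup.lift (fun _ => Multiplicative.ofAdd (1 : ZMod 2))

theorem squares_normal_closure_in_kernel_is_normal (A : Type*)
    (K : Subgroup (FreeGroup A)) (hK : K = (modTwoHom A).ker)
    (N : Subgroup K)
    (hN : N = Subgroup.normalClosure
      {x : K | ∃ a : A, (x : FreeGroup A) = FreeGroup.of a ^ 2}) :
    (N.map K.subtype).Normal := by
  subst hK hN
  set K := (modTwoHom A).ker with hKdef
  set S : Set K := {x : K | ∃ a : A, (x : FreeGroup A) = FreeGroup.of a ^ 2} with hS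
  have hsq : ∀ a : A, (FreeGroup.of a) ^ 2 ∈ K := by
    intro a
    have : modTwoHom A (FreeGroup.of a) = Multiplicative.ofAdd (1 : ZMod 2) := by
      rw [modTwoHom, FreeGroup.lift_apply_of]
    rw [hKdef, MonoidHom.mem_ker, map_pow, this]
    decide
  -- conjugates by elements of K land in the image
  have conjK : ∀ (k : FreeGroup A), k ∈ K → ∀ a : A,
      k * (FreeGroup.of a) ^ 2 * k⁻¹ ∈
        Subgroup.map K.subtype (Subgroup.normalClosure S) := by
    intro k hk a
    have hmem : (⟨(FreeGroup.of a) ^ 2, hsq a⟩ : K) ∈ Subgroup.normalClosure S :=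
      Subgroup.subset_normalClosure ⟨a, rfl⟩
    have hconj := (Subgroup.normalClosure_normal (s := S)).conj_mem _ hmem ⟨k, hk⟩
    exact ⟨_, hconj, rfl⟩
  have conjAll : ∀ (g : FreeGroup A) (a : A),
      g * (FreeGroup.of a) ^ 2 * g⁻¹ ∈
        Subgroup.map K.subtype (Subgroup.normalClosure S) := by
    intro g a
    by_cases hg : g ∈ K
    · exact conjK g hg a
    · have hga : g * FreeGroup.of a ∈ K := by
        have h1 : modTwoHom A (FreeGroup.of a) = Multiplicative.ofAdd (1 : ZMod 2) := by
          rw [modTwoHom, FreeGroup.lift_apply_of]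
        have h2 : modTwoHom A g ≠ 1 := hg
        have key : ∀ z : Multiplicative (ZMod 2),
            z ≠ 1 → z * Multiplicative.ofAdd (1 : ZMod 2) = 1 := by decide
        rw [hKdef, MonoidHom.mem_ker, map_mul, h1]
        exact key _ h2
      have heq : g * (FreeGroup.of a) ^ 2 * g⁻¹ =
          (g * FreeGroup.of a) * (FreeGroup.of a) ^ 2 * (g * FreeGroup.of a)⁻¹ := by
        group
      rw [heq]
      exact conjK _ hga a
  have hmap : Subgroup.map K.subtype (Subgroup.normalClosure S) =
      Subgroup.normalClosure {x : FreeGroup A | ∃ a : A, x = FreeGroup.of a ^ 2} := by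
    apply le_antisymm
    · rw [Subgroup.map_le_iff_le_comap]
      haveI : ((Subgroup.normalClosure
          {x : FreeGroup A | ∃ a : A, x = FreeGroup.of a ^ 2}).comap K.subtype).Normal :=
        (Subgroup.normalClosure_normal).comap _
      apply Subgroup.normalClosure_le_normal
      rintro x ⟨a, ha⟩
      exact Subgroup.subset_normalClosure ⟨a, ha⟩
    · rw [Subgroup.normalClosure, Subgroup.closure_le]
      intro x hx
      rw [Group.mem_conjugatesOfSet_iff] at hx
      obtain ⟨y, ⟨a, rfl⟩, c, hc⟩ := hx
      have hx' : x = (c : FreeGroup A) * FreeGroup.of a ^ 2 * (c : FreeGroup A)⁻¹ := by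
        have h := hc.eq
        rw [mul_assoc]
        exact eq_mul_inv_of_mul_eq h.symm |>.trans (by rw [mul_assoc])
      rw [hx']
      exact conjAll _ a
  rw [hmap]
  exact Subgroup.normalClosure_normal
end

section
/- Let F be the free group on the set A ∪ {a⁺} (a⁺ ∉ A), and let F⁽²⁾ be the kernel of the homomorphism F → ℤ/2ℤ sending every generator to 1. Then F⁽²⁾ is freely generated by the set {x_{a⁺}²} ∪ {x_a² : a ∈ A} ∪ {x_a·x_{a⁺} : a ∈ A}; consequently, if N is the normal closure in F of {x_b² : b ∈ A ∪ {a⁺}}, then the quotient F⁽²⁾/N is a free group freely generated by the images of the elements x_a·x_{a⁺}, a ∈ A. -/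
namespace EvenKernelAux

open SemidirectProduct

/-- The homomorphism from `Multiplicative (ZMod 2)` determined by an involution. -/
def invoHom {G : Type*} [Group G] (g : G) (h : g * g = 1) :
    Multiplicative (ZMod 2) →* G where
  toFun x := g ^ (Multiplicative.toAdd x).val
  map_one' := by
    show g ^ (0 : ZMod 2).val = 1
    rw [show ((0 : ZMod 2)).val = 0 by decide, pow_zero]
  map_mul' x y := by
    have hz : ∀ z : ZMod 2, z = 0 ∨ z = 1 := by decide
    have hxy : Multiplicative.toAdd (x * y) = Multiplicative.toAdd x + Multiplicative.toAdd y := rfl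
    have v0 : ((0 : ZMod 2)).val = 0 := by decide
    have v1 : ((1 : ZMod 2)).val = 1 := by decide
    show g ^ (Multiplicative.toAdd (x * y)).val
      = g ^ (Multiplicative.toAdd x).val * g ^ (Multiplicative.toAdd y).val
    obtain hx | hx := hz (Multiplicative.toAdd x) <;>
      obtain hy | hy := hz (Multiplicative.toAdd y) <;>
      rw [hxy, hx, hy]
    · rw [show ((0 : ZMod 2) + 0) = 0 by decide, v0, pow_zero, one_mul]
    · rw [show ((0 : ZMod 2) + 1) = 1 by decide, v0, v1, pow_zero, one_mul]
    · rw [show ((1 : ZMod 2) + 0) = 1 by decide, v0, v1, pow_zero, mul_one]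
    · rw [show ((1 : ZMod 2) + 1) = 0 by decide, v0, v1, pow_zero, pow_one]
      exact h.symm

@[simp] lemma invoHom_t {G : Type*} [Group G] (g : G) (h : g * g = 1) :
    invoHom g h (Multiplicative.ofAdd (1 : ZMod 2)) = g := by
  show g ^ (1 : ZMod 2).val = g
  rw [show ((1 : ZMod 2)).val = 1 by decide, pow_one]

variable (A : Type*)

/-- The inversion homomorphism on a free group. -/
def negHom : FreeGroup A →* FreeGroup A := FreeGroup.lift fun a => (FreeGroup.of a)⁻¹

lemma negHom_comp : (negHom A).comp (negHom A) = MonoidHom.id _ := by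
  ext a
  simp [negHom]

/-- Inversion as an automorphism. -/
def negAut : MulAut (FreeGroup A) :=
  MonoidHom.toMulEquiv (negHom A) (negHom A) (negHom_comp A) (negHom_comp A)

lemma negAut_sq : negAut A * negAut A = 1 := by
  apply MulEquiv.ext
  intro x
  exact DFunLike.congr_fun (negHom_comp A) x

/-- The action of `ZMod 2` on the free group by inversion. -/
def act : Multiplicative (ZMod 2) →* MulAut (FreeGroup A) :=
  invoHom (negAut A) (negAut_sq A)

local notation "t" => Multiplicative.ofAdd (1 : ZMod 2)

lemma act_t (x : FreeGroup A) : act A t x = negHom A x := by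
  rw [act, invoHom_t]
  rfl

lemma act_t_of (a : A) : act A t (FreeGroup.of a) = (FreeGroup.of a)⁻¹ := by
  rw [act_t]
  simp [negHom]

lemma t_mul_t : (t : Multiplicative (ZMod 2)) * t = 1 := by decide

/-- The semidirect product. -/
abbrev Gp := SemidirectProduct (FreeGroup A) (Multiplicative (ZMod 2)) (act A)

/-- The main homomorphism F → FreeGroup A ⋊ ZMod 2. -/
noncomputable def phi : FreeGroup (A ⊕ Unit) →* Gp A :=
  FreeGroup.lift (Sum.elim (fun a => inl (FreeGroup.of a) * inr t) (fun _ => inr t))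

lemma phi_inl (a : A) : phi A (FreeGroup.of (Sum.inl a)) = inl (FreeGroup.of a) * inr t := by
  simp [phi]

lemma phi_inr (u : Unit) : phi A (FreeGroup.of (Sum.inr u)) = inr t := by
  simp [phi]

lemma right_phi (x : FreeGroup (A ⊕ Unit)) : (phi A x).right = modTwoHom (A ⊕ Unit) x := by
  have : (rightHom.comp (phi A) : FreeGroup (A ⊕ Unit) →* Multiplicative (ZMod 2))
      = modTwoHom (A ⊕ Unit) := by
    ext b
    cases b with
    | inl a => simp [phi, modTwoHom]
    | inr u => simp [phi, modTwoHom]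
  exact DFunLike.congr_fun this x

lemma phi_sq (b : A ⊕ Unit) : phi A (FreeGroup.of b ^ 2) = 1 := by
  rw [map_pow, sq]
  cases b with
  | inl a =>
    rw [phi_inl, ← mk_eq_inl_mul_inr, mul_def]
    show (⟨FreeGroup.of a * act A t (FreeGroup.of a), t * t⟩ : Gp A) = 1
    rw [act_t_of, mul_inv_cancel, t_mul_t]
    rfl
  | inr u =>
    rw [phi_inr, ← map_mul, t_mul_t, map_one]

/-- The set of squares of generators. -/
def SqSet : Set (FreeGroup (A ⊕ Unit)) := {x : FreeGroup (A ⊕ Unit) | ∃ b : A ⊕ Unit, x = FreeGroup.of b ^ 2}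

lemma N_le_ker : Subgroup.normalClosure (SqSet A) ≤ (phi A).ker := by
  apply Subgroup.normalClosure_le_normal
  rintro x ⟨b, rfl⟩
  exact phi_sq A b

/-- The quotient of F by the normal closure of squares. -/
abbrev Qt := FreeGroup (A ⊕ Unit) ⧸ Subgroup.normalClosure (SqSet A)

noncomputable def pi : FreeGroup (A ⊕ Unit) →* Qt A :=
  QuotientGroup.mk' _

lemma pi_sq (b : A ⊕ Unit) : pi A (FreeGroup.of b) * pi A (FreeGroup.of b) = 1 := by
  rw [← map_mul, ← sq]
  exact (QuotientGroup.eq_one_iff _).2 (Subgroup.subset_normalClosure ⟨b, rfl⟩)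

lemma pi_inv (b : A ⊕ Unit) : (pi A (FreeGroup.of b))⁻¹ = pi A (FreeGroup.of b) := by
  rw [inv_eq_iff_mul_eq_one, pi_sq]

noncomputable def fQ : FreeGroup A →* Qt A :=
  FreeGroup.lift fun a => pi A (FreeGroup.of (Sum.inl a) * FreeGroup.of (Sum.inr ()))

lemma fQ_of (a : A) :
    fQ A (FreeGroup.of a) = pi A (FreeGroup.of (Sum.inl a)) * pi A (FreeGroup.of (Sum.inr ())) := by
  rw [fQ, FreeGroup.lift_apply_of, map_mul]

noncomputable def gQ : Multiplicative (ZMod 2) →* Qt A :=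
  invoHom (pi A (FreeGroup.of (Sum.inr ()))) (pi_sq A (Sum.inr ()))

lemma gQ_t : gQ A t = pi A (FreeGroup.of (Sum.inr ())) := invoHom_t _ _

lemma compat : ∀ m : Multiplicative (ZMod 2),
    (fQ A).comp ((act A) m).toMonoidHom
      = (MulAut.conj ((gQ A) m)).toMonoidHom.comp (fQ A) := by
  have hz : ∀ z : Multiplicative (ZMod 2), z = 1 ∨ z = t := by decide
  intro m
  obtain hm | hm := hz m
  · subst hm
    rw [map_one, map_one]
    ext a
    simp
  · subst hm
    ext a
    show fQ A (act A t (FreeGroup.of a)) = gQ A t * fQ A (FreeGroup.of a) * (gQ A t)⁻¹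
    rw [act_t_of, map_inv, fQ_of, gQ_t, mul_inv_rev, pi_inv, pi_inv]
    simp [mul_assoc, pi_sq]

noncomputable def theta : Gp A →* Qt A := SemidirectProduct.lift (fQ A) (gQ A) (compat A)

lemma theta_apply (z : Gp A) : theta A z = fQ A z.left * gQ A z.right := rfl

lemma theta_phi : (theta A).comp (phi A) = pi A := by
  ext b
  show theta A (phi A (FreeGroup.of b)) = pi A (FreeGroup.of b)
  cases b with
  | inl a =>
    rw [phi_inl, map_mul]
    show theta A (inl (FreeGroup.of a)) * theta A (inr t) = _
    rw [theta, lift_inl, lift_inr, fQ_of, gQ_t, mul_assoc, pi_sq, mul_one]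
  | inr u =>
    rw [phi_inr]
    show theta A (inr t) = _
    rw [theta, lift_inr, gQ_t]

/-- The kernel subgroup. -/
noncomputable abbrev KK : Subgroup (FreeGroup (A ⊕ Unit)) := (modTwoHom (A ⊕ Unit)).ker

noncomputable def eK : KK A →* FreeGroup A where
  toFun x := (phi A x.1).left
  map_one' := by simp
  map_mul' x y := by
    have hx : (phi A x.1).right = 1 := by
      rw [right_phi]; exact x.2
    show (phi A (x.1 * y.1)).left = (phi A x.1).left * (phi A y.1).left
    rw [map_mul, SemidirectProduct.mul_left, hx, map_one]
    rfl

instance normalN' : ((Subgroup.normalClosure (SqSet A)).subgroupOf (KK A)).Normal :=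
  Subgroup.Normal.subgroupOf Subgroup.normalClosure_normal _

noncomputable def ebar :
    (KK A ⧸ (Subgroup.normalClosure (SqSet A)).subgroupOf (KK A)) →* FreeGroup A :=
  QuotientGroup.lift _ (eK A) (by
    intro x hx
    have h1 : phi A x.1 = 1 := N_le_ker A (Subgroup.mem_subgroupOf.1 hx)
    show (phi A x.1).left = 1
    rw [h1]
    rfl)

lemma mem_KK (a : A) :
    FreeGroup.of (Sum.inl a) * FreeGroup.of (Sum.inr ()) ∈ KK A := by
  show modTwoHom (A ⊕ Unit) _ = 1
  rw [map_mul]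
  simp only [modTwoHom, FreeGroup.lift_apply_of]
  decide

noncomputable def iota :
    FreeGroup A →* (KK A ⧸ (Subgroup.normalClosure (SqSet A)).subgroupOf (KK A)) :=
  FreeGroup.lift fun a => QuotientGroup.mk ⟨_, mem_KK A a⟩

noncomputable def jQ :
    (KK A ⧸ (Subgroup.normalClosure (SqSet A)).subgroupOf (KK A)) →* Qt A :=
  QuotientGroup.lift _ ((pi A).comp (KK A).subtype) (by
    intro x hx
    exact (QuotientGroup.eq_one_iff _).2 (Subgroup.mem_subgroupOf.1 hx))

lemma jQ_mk (x : KK A) : jQ A (QuotientGroup.mk x) = pi A x.1 := rfl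

lemma jQ_injective : Function.Injective (jQ A) := by
  rw [injective_iff_map_eq_one]
  intro q hq
  induction q using QuotientGroup.induction_on with
  | H x =>
    rw [jQ_mk] at hq
    exact (QuotientGroup.eq_one_iff x).2 (Subgroup.mem_subgroupOf.2 ((QuotientGroup.eq_one_iff _).1 hq))

lemma jQ_iota : (jQ A).comp (iota A) = fQ A := by
  ext a
  show jQ A (iota A (FreeGroup.of a)) = fQ A (FreeGroup.of a)
  rw [iota, FreeGroup.lift_apply_of, jQ_mk, fQ, FreeGroup.lift_apply_of]

lemma eK_gen (a : A) (x : KK A)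
    (hx : (x : FreeGroup (A ⊕ Unit)) = FreeGroup.of (Sum.inl a) * FreeGroup.of (Sum.inr ())) :
    eK A x = FreeGroup.of a := by
  show (phi A x.1).left = FreeGroup.of a
  rw [hx, map_mul, phi_inl, phi_inr, mul_assoc, ← map_mul, t_mul_t, map_one, mul_one, left_inl]

lemma iota_ebar : (iota A).comp (ebar A) = MonoidHom.id _ := by
  apply QuotientGroup.monoidHom_ext
  ext x
  show iota A (ebar A (QuotientGroup.mk x)) = QuotientGroup.mk x
  rw [ebar, QuotientGroup.lift_mk]
  apply jQ_injective A
  have h1 : jQ A (iota A (eK A x)) = fQ A (eK A x) := DFunLike.congr_fun (jQ_iota A) _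
  rw [h1, jQ_mk]
  have h3 : pi A x.1 = theta A (phi A x.1) := (DFunLike.congr_fun (theta_phi A) x.1).symm
  rw [h3, theta_apply]
  have hr : (phi A x.1).right = 1 := by rw [right_phi]; exact x.2
  rw [hr, map_one, mul_one]
  rfl

lemma ebar_iota : (ebar A).comp (iota A) = MonoidHom.id _ := by
  ext a
  show ebar A (iota A (FreeGroup.of a)) = FreeGroup.of a
  rw [iota, FreeGroup.lift_apply_of, ebar, QuotientGroup.lift_mk]
  exact eK_gen A a _ rfl

/-- The main equivalence. -/
noncomputable def mainEquiv :
    (KK A ⧸ (Subgroup.normalClosure (SqSet A)).subgroupOf (KK A)) ≃* FreeGroup A :=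
  MonoidHom.toMulEquiv (ebar A) (iota A) (iota_ebar A) (ebar_iota A)

lemma mainEquiv_spec (a : A) (x : KK A)
    (hx : (x : FreeGroup (A ⊕ Unit)) = FreeGroup.of (Sum.inl a) * FreeGroup.of (Sum.inr ())) :
    mainEquiv A (QuotientGroup.mk x) = FreeGroup.of a := by
  show ebar A (QuotientGroup.mk x) = FreeGroup.of a
  rw [ebar, QuotientGroup.lift_mk]
  exact eK_gen A a x hx

end EvenKernelAux

theorem even_kernel_mod_squares_is_free (A : Type*)
    (K : Subgroup (FreeGroup (A ⊕ Unit))) (hK : K = (modTwoHom (A ⊕ Unit)).ker)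
    (N : Subgroup (FreeGroup (A ⊕ Unit)))
    (hN : N = Subgroup.normalClosure
      {x : FreeGroup (A ⊕ Unit) | ∃ b : A ⊕ Unit, x = FreeGroup.of b ^ 2})
    [hNn : (N.subgroupOf K).Normal] :
    ∃ e : (K ⧸ N.subgroupOf K) ≃* FreeGroup A,
      ∀ (a : A) (x : K),
        (x : FreeGroup (A ⊕ Unit)) =
          FreeGroup.of (Sum.inl a) * FreeGroup.of (Sum.inr ()) →
        e (QuotientGroup.mk x) = FreeGroup.of a := by
  subst hK hN
  exact ⟨EvenKernelAux.mainEquiv A, fun a x hx => EvenKernelAux.mainEquiv_spec A a x hx⟩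
end

section
/- The group with presentation ⟨a, b ; aba = bab, a² = b²⟩ is isomorphic to a semidirect product of ℤ acting on ℤ/3ℤ by the nontrivial action (inversion); in particular its abelianization is ℤ and it contains a normal subgroup of order 3 with infinite cyclic quotient. -/
/-!
In any group, `a² = b²` gives `b (ab⁻¹) b⁻¹ = (ab⁻¹)⁻¹`, and together with `aba = bab` it
forces `(ab⁻¹)³ = 1`. Hence `1 ↦ ab⁻¹` on `ℤ/3` and `1 ↦ b` on `ℤ` assemble to a
homomorphism out of `ℤ/3 ⋊ ℤ`, inverse to the map `a ↦ (1, 1)`, `b ↦ (0, 1)` out of the presented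
group: both composites fix the generators.
-/

open FreeGroup in
/-- Relators `aba(bab)⁻¹` and `a²b⁻²` on two generators. -/
def torusKnotRels : Set (FreeGroup (Fin 2)) :=
  {of 0 * of 1 * of 0 * (of 1 * of 0 * of 1)⁻¹,
   of 0 ^ 2 * (of 1 ^ 2)⁻¹}

/-- The action of `ℤ` on `ℤ/3` in which the generator acts by inversion. -/
noncomputable def invAction : Multiplicative ℤ →* MulAut (Multiplicative (ZMod 3)) :=
  zpowersHom _ (MulEquiv.inv (Multiplicative (ZMod 3)))

open Multiplicative

section ZModHom

variable {n : ℕ}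

theorem MonoidHom.ext_mzmod {M : Type*} [Monoid M] {f g : Multiplicative (ZMod n) →* M}
    (h : f (ofAdd 1) = g (ofAdd 1)) : f = g := by
  let cast : Multiplicative ℤ →* Multiplicative (ZMod n) :=
    AddMonoidHom.toMultiplicative (Int.castAddHom (ZMod n))
  have hcast : f.comp cast = g.comp cast := MonoidHom.ext_mint (by simpa [cast] using h)
  refine MonoidHom.ext fun x => ?_
  obtain ⟨k, hk⟩ := ZMod.intCast_surjective (toAdd x)
  rw [← ofAdd_toAdd x, ← hk]
  exact DFunLike.congr_fun hcast (ofAdd k)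

variable {G : Type*} [Group G]

def zmodPowersHom (x : G) (hx : x ^ n = 1) : Multiplicative (ZMod n) →* G :=
  AddMonoidHom.toMultiplicativeLeft
    (ZMod.lift n ⟨zmultiplesHom _ (Additive.ofMul x), by simp [← ofMul_pow, hx]⟩)

@[simp]
theorem zmodPowersHom_ofAdd_intCast (x : G) (hx : x ^ n = 1) (k : ℤ) :
    zmodPowersHom x hx (ofAdd (k : ZMod n)) = x ^ k := by
  simp [zmodPowersHom]

@[simp]
theorem zmodPowersHom_ofAdd_one (x : G) (hx : x ^ n = 1) :
    zmodPowersHom x hx (ofAdd 1) = x := by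
  simpa using zmodPowersHom_ofAdd_intCast x hx 1

end ZModHom

theorem MonoidHom.comp_zpowersHom_eq_conj_comp {N H : Type*} [Group N] [Group H] {σ : MulAut N}
    {f : N →* H} {t : H} (hσ : f.comp σ.toMonoidHom = (MulAut.conj t).toMonoidHom.comp f)
    (g : Multiplicative ℤ) :
    f.comp (zpowersHom _ σ g).toMonoidHom =
      (MulAut.conj (zpowersHom _ t g)).toMonoidHom.comp f := by
  have h (x : N) : f (σ x) = t * f x * t⁻¹ := DFunLike.congr_fun hσ x
  have hinv (x : N) : f (σ⁻¹ x) = t⁻¹ * f x * t := by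
    have := h (σ⁻¹ x)
    rw [MulAut.apply_inv_self] at this
    rw [this]
    group
  have hpow (k : ℤ) (x : N) : f ((σ ^ k) x) = t ^ k * f x * (t ^ k)⁻¹ := by
    induction k using Int.induction_on generalizing x with
    | zero => simp
    | succ k ih => rw [zpow_add_one, zpow_add_one, MulAut.mul_apply, ih, h]; group
    | pred k ih => rw [zpow_sub_one, zpow_sub_one, MulAut.mul_apply, ih, hinv]; group
  ext x
  simp [-map_zpow, hpow]

section Relations

variable {G : Type*} [Group G] {a b : G}

theorem mul_inv_conj_eq_inv (h₂ : a * a = b * b) : b * (a * b⁻¹) * b⁻¹ = (a * b⁻¹)⁻¹ :=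
  calc b * (a * b⁻¹) * b⁻¹ = b * a * (b * b)⁻¹ := by group
    _ = b * a * (a * a)⁻¹ := by rw [h₂]
    _ = (a * b⁻¹)⁻¹ := by group

theorem mul_inv_pow_three (h₁ : a * b * a = b * a * b) (h₂ : a * a = b * b) :
    (a * b⁻¹) ^ 3 = 1 := by
  have h₃ : b⁻¹ * a = b * a⁻¹ :=
    calc b⁻¹ * a = b⁻¹ * (a * a) * a⁻¹ := by group
      _ = b⁻¹ * (b * b) * a⁻¹ := by rw [h₂]
      _ = b * a⁻¹ := by group
  have h₄ : a * b * a⁻¹ = b * a * b⁻¹ :=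
    calc a * b * a⁻¹ = (a * b * a) * (a * a)⁻¹ := by group
      _ = (b * a * b) * (b * b)⁻¹ := by rw [h₁, h₂]
      _ = b * a * b⁻¹ := by group
  calc (a * b⁻¹) ^ 3 = a * (b⁻¹ * a) * (b⁻¹ * a) * b⁻¹ := by rw [pow_three]; group
    _ = (a * b * a⁻¹) * (b * a⁻¹ * b⁻¹) := by rw [h₃]; group
    _ = 1 := by rw [h₄]; group

end Relations

theorem PresentedGroup.torusKnot_braid :
    (PresentedGroup.of 0 * .of 1 * .of 0 : PresentedGroup torusKnotRels) = .of 1 * .of 0 * .of 1 :=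
  PresentedGroup.mk_eq_mk_of_mul_inv_mem (Set.mem_insert _ _)

theorem PresentedGroup.torusKnot_sq :
    (PresentedGroup.of 0 * .of 0 : PresentedGroup torusKnotRels) = .of 1 * .of 1 := by
  rw [← pow_two, ← pow_two]
  exact PresentedGroup.mk_eq_mk_of_mul_inv_mem (Set.mem_insert_of_mem _ rfl)

local notation "Z₃⋊Z" => SemidirectProduct (Multiplicative (ZMod 3)) (Multiplicative ℤ) invAction

section Lifts

variable {G : Type*} [Group G] (a b : G) (h₁ : a * b * a = b * a * b) (h₂ : a * a = b * b)

def torusKnotLift : PresentedGroup torusKnotRels →* G :=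
  PresentedGroup.toGroup (f := ![a, b]) <| by
    rintro r (rfl | rfl) <;> simp [h₁, h₂, pow_two]

@[simp]
theorem torusKnotLift_of_zero : torusKnotLift a b h₁ h₂ (.of 0) = a :=
  PresentedGroup.toGroup.of _

@[simp]
theorem torusKnotLift_of_one : torusKnotLift a b h₁ h₂ (.of 1) = b :=
  PresentedGroup.toGroup.of _

theorem zmodPowersHom_comp_invAction (g : Multiplicative ℤ) :
    (zmodPowersHom (a * b⁻¹) (mul_inv_pow_three h₁ h₂)).comp (invAction g).toMonoidHom =
      (MulAut.conj (zpowersHom G b g)).toMonoidHom.comp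
        (zmodPowersHom (a * b⁻¹) (mul_inv_pow_three h₁ h₂)) := by
  refine MonoidHom.comp_zpowersHom_eq_conj_comp (MonoidHom.ext_mzmod ?_) g
  simpa using (mul_inv_conj_eq_inv h₂).symm

noncomputable def semidirectLift : Z₃⋊Z →* G :=
  SemidirectProduct.lift _ _ (zmodPowersHom_comp_invAction a b h₁ h₂)

@[simp]
theorem semidirectLift_inl_ofAdd_one : semidirectLift a b h₁ h₂ (.inl (ofAdd 1)) = a * b⁻¹ := by
  simp [semidirectLift]

@[simp]
theorem semidirectLift_inr_ofAdd_one : semidirectLift a b h₁ h₂ (.inr (ofAdd 1)) = b := by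
  simp [semidirectLift]

end Lifts

noncomputable def semidirectA : Z₃⋊Z := .inl (ofAdd 1) * .inr (ofAdd 1)

theorem semidirectA_braid :
    semidirectA * .inr (ofAdd 1) * semidirectA = .inr (ofAdd 1) * semidirectA * .inr (ofAdd 1) := by
  ext <;> simp [semidirectA, invAction] <;> decide

theorem semidirectA_sq : semidirectA * semidirectA = .inr (ofAdd 1) * .inr (ofAdd 1) := by
  ext <;> simp [semidirectA, invAction] <;> decide

theorem semidirectLift_comp_torusKnotLift :
    (semidirectLift _ _ PresentedGroup.torusKnot_braid PresentedGroup.torusKnot_sq).comp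
      (torusKnotLift semidirectA (.inr (ofAdd 1)) semidirectA_braid semidirectA_sq) =
      MonoidHom.id _ := by
  refine PresentedGroup.ext fun i => ?_
  fin_cases i <;> simp [semidirectA]

theorem torusKnotLift_comp_semidirectLift :
    (torusKnotLift semidirectA (.inr (ofAdd 1)) semidirectA_braid semidirectA_sq).comp
      (semidirectLift _ _ PresentedGroup.torusKnot_braid PresentedGroup.torusKnot_sq) =
      MonoidHom.id _ := by
  refine SemidirectProduct.hom_ext (MonoidHom.ext_mzmod ?_) (MonoidHom.ext_mint ?_) <;>
    simp [semidirectA]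

/-- The group `⟨a, b ; aba = bab, a² = b²⟩` is isomorphic to the semidirect product
`ℤ/3 ⋊ ℤ` where the generator of `ℤ` acts by inversion. -/
theorem dehn_group_example_semidirect :
    Nonempty
      (PresentedGroup torusKnotRels ≃*
        SemidirectProduct (Multiplicative (ZMod 3)) (Multiplicative ℤ) invAction) :=
  ⟨MonoidHom.toMulEquiv _ _ semidirectLift_comp_torusKnotLift torusKnotLift_comp_semidirectLift⟩
end
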